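/- arXiv:2405.14606 — 2 statements merged into one kernel-verified Lean document; each statement's English description precedes it below -/
import Mathlib

section
/- Every GML formula of modal depth n and width k is logically equivalent over pointed Π-labeled graphs to a finite disjunction of graded Π-types of width k and modal depth n. -/
/-- A finite directed node-labeled graph: finite node set `V`, out-neighbour
finsets `adj v`, and a labeling of nodes by sets of node label symbols from `α`. -/
structure LGraph (α : Type) : Type 1 where
  V : Type
  fintypeV : Fintype V
  adj : V → Finset V
  label : V → Set α

attribute [instance] LGraph.fintypeV

/-- Formulas of graded modal logic GML over node label symbols `α`:
`⊤`, labels, negation, conjunction, and graded diamonds `◇_{≥k}`. -/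
inductive GML (α : Type) : Type where
  | top : GML α
  | lab : α → GML α
  | neg : GML α → GML α
  | and : GML α → GML α → GML α
  | dia : ℕ → GML α → GML α

/-- Truth of a GML formula at a node of a labeled graph; `dia k φ` (`◇_{≥k}φ`)
holds iff at least `k` out-neighbours satisfy `φ`. -/
def GML.sat {α : Type} (G : LGraph α) : GML α → G.V → Prop
  | .top, _ => True
  | .lab p, v => p ∈ G.label v
  | .neg φ, v => ¬ GML.sat G φ v
  | .and φ ψ, v => GML.sat G φ v ∧ GML.sat G ψ v
  | .dia k φ, v => ∃ s : Finset G.V, s ⊆ G.adj v ∧ k ≤ s.card ∧ ∀ u ∈ s, GML.sat G φ u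

/-- `⊥` as a GML formula. -/
def GML.bot {α : Type} : GML α := .neg .top

/-- `□φ := ¬◇_{≥1}¬φ`. -/
def GML.box {α : Type} (φ : GML α) : GML α := .neg (.dia 1 (.neg φ))

/-- `◇_{=n}φ := ◇_{≥n}φ ∧ ¬◇_{≥n+1}φ`. -/
def GML.diaEq {α : Type} (n : ℕ) (φ : GML α) : GML α := .and (.dia n φ) (.neg (.dia (n + 1) φ))

/-- Schemata of GMSC over node label symbols `α` and head predicates (schema variables) `ν`. -/
inductive Schema (α ν : Type) : Type where
  | top : Schema α ν
  | lab : α → Schema α ν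
  | var : ν → Schema α ν
  | neg : Schema α ν → Schema α ν
  | and : Schema α ν → Schema α ν → Schema α ν
  | dia : ℕ → Schema α ν → Schema α ν

/-- Substituting a GML formula for each head predicate of a schema. -/
def Schema.subst {α ν : Type} (σ : ν → GML α) : Schema α ν → GML α
  | .top => .top
  | .lab p => .lab p
  | .var X => σ X
  | .neg φ => .neg (φ.subst σ)
  | .and φ ψ => .and (φ.subst σ) (ψ.subst σ)
  | .dia k φ => .dia k (φ.subst σ)

/-- A GMSC program over node label symbols `α` with head predicates `ν`:
terminal clauses `X(0) :− term X`, iteration clauses `X :− iter X`, and a set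
`app` of appointed predicates. -/
structure Program (α ν : Type) where
  term : ν → GML α
  iter : ν → Schema α ν
  app : Set ν

/-- The `n`-th iteration formula `Xⁿ` of a head predicate `X`: `X⁰` is the terminal body,
and `X^{n+1}` is the iteration body with each head predicate `Y` replaced by `Yⁿ`. -/
def Program.iterFormula {α ν : Type} (P : Program α ν) : ℕ → ν → GML α
  | 0 => P.term
  | n + 1 => fun X => (P.iter X).subst (P.iterFormula n)

/-- The program accepts `(G, w)` iff some appointed predicate's iteration formula is
true at `w` in some round. -/
def Program.accepts {α ν : Type} (P : Program α ν) (G : LGraph α) (w : G.V) : Prop :=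
  ∃ X ∈ P.app, ∃ n : ℕ, GML.sat G (P.iterFormula n X) w

/-- The modal depth of a GML formula: maximal nesting of graded diamonds. -/
def GML.mdepth {α : Type} : GML α → ℕ
  | .top => 0
  | .lab _ => 0
  | .neg φ => φ.mdepth
  | .and φ ψ => max φ.mdepth ψ.mdepth
  | .dia _ φ => φ.mdepth + 1

/-- The width of a GML formula: the maximal `k` appearing in a diamond `◇_{≥k}`. -/
def GML.width {α : Type} : GML α → ℕ
  | .top => 0
  | .lab _ => 0
  | .neg φ => φ.width
  | .and φ ψ => max φ.width ψ.width
  | .dia k φ => max k φ.width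

/-- Finite conjunction of a list of GML formulas. -/
def bigAnd {α : Type} : List (GML α) → GML α
  | [] => .top
  | φ :: l => .and φ (bigAnd l)

/-- Abstract data of a graded `α`-type of width `k`: at depth 0, which labels hold;
at depth `n+1`, the depth-0 data together with, for each depth-`n` type, its number of
out-neighbour occurrences counted up to the cap `k` (value `k` meaning `≥ k`). -/
def TypeData (α : Type) (k : ℕ) : ℕ → Type
  | 0 => α → Bool
  | n + 1 => (α → Bool) × (TypeData α k n → Fin (k + 1))

noncomputable def tdInst (α : Type) [Fintype α] [DecidableEq α] (k : ℕ) :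
    ∀ n, PSigma fun _ : Fintype (TypeData α k n) => DecidableEq (TypeData α k n)
  | 0 =>
    ⟨inferInstanceAs (Fintype (α → Bool)), inferInstanceAs (DecidableEq (α → Bool))⟩
  | n + 1 =>
    letI := (tdInst α k n).1
    letI := (tdInst α k n).2
    ⟨inferInstanceAs (Fintype ((α → Bool) × (TypeData α k n → Fin (k + 1)))),
     inferInstanceAs (DecidableEq ((α → Bool) × (TypeData α k n → Fin (k + 1))))⟩

noncomputable instance {α : Type} [Fintype α] [DecidableEq α] {k n : ℕ} :
    Fintype (TypeData α k n) := (tdInst α k n).1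

noncomputable instance {α : Type} [Fintype α] [DecidableEq α] {k n : ℕ} :
    DecidableEq (TypeData α k n) := (tdInst α k n).2

/-- The depth-0 part of a type as a GML formula: the conjunction over `p ∈ α` of `p` or `¬p`. -/
noncomputable def baseFormula {α : Type} [Fintype α] [DecidableEq α] (t : α → Bool) : GML α :=
  bigAnd ((Finset.univ : Finset α).toList.map fun p =>
    if t p then GML.lab p else GML.neg (GML.lab p))

/-- The GML formula of a graded type of width `k` and modal depth `n`: at depth `n+1`, the
conjunction of the depth-0 type with, for each depth-`n` type `τ` counted `ℓ < k` times the
conjunct `◇_{=ℓ}τ`, and for each `τ` counted `≥ k` times the conjunct `◇_{≥k}τ`. -/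
noncomputable def TypeData.toFormula {α : Type} [Fintype α] [DecidableEq α] {k : ℕ} :
    ∀ {n : ℕ}, TypeData α k n → GML α
  | 0, t => baseFormula t
  | n + 1, t =>
    GML.and (baseFormula (t.1))
      (bigAnd ((Finset.univ : Finset (TypeData α k n)).toList.map fun τ =>
        if (t.2 τ : ℕ) < k then GML.diaEq (t.2 τ) (TypeData.toFormula τ)
        else GML.dia k (TypeData.toFormula τ)))

/-! Two pointed graphs with the same graded type of width `k` and depth `n` agree on every GML
formula of width `≤ k` and depth `≤ n`: at a diamond `◇_{≥m}ψ`, the number of out-neighbours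
satisfying `ψ` is the sum, over the depth-`(n-1)` types whose nodes satisfy `ψ`, of the
numbers of out-neighbours of that type, and since `m ≤ k` these numbers capped at `k` already
decide whether the sum reaches `m`. A formula is therefore equivalent to the disjunction of the
types of the pointed graphs satisfying it, and each type formula holds exactly at the nodes of
that type. -/

open Finset Classical

lemma Finset.le_sum_iff_le_sum_of_min_eq {ι : Type*} {s : Finset ι} {f g : ι → ℕ} {k m : ℕ}
    (hm : m ≤ k) (h : ∀ i ∈ s, min (f i) k = min (g i) k) :
    m ≤ ∑ i ∈ s, f i ↔ m ≤ ∑ i ∈ s, g i := by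
  by_cases hbig : ∃ i ∈ s, k ≤ f i
  · obtain ⟨i, hi, hfi⟩ := hbig
    have hgi : k ≤ g i := by have := h i hi; omega
    have hf : k ≤ ∑ i ∈ s, f i := hfi.trans (single_le_sum (fun _ _ => Nat.zero_le _) hi)
    have hg : k ≤ ∑ i ∈ s, g i := hgi.trans (single_le_sum (fun _ _ => Nat.zero_le _) hi)
    omega
  · push Not at hbig
    rw [sum_congr rfl fun i hi => show f i = g i by have := h i hi; have := hbig i hi; omega]

lemma Finset.card_filter_comp_eq_sum {V β : Type*} [Fintype β] [DecidableEq β] (s : Finset V)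
    (f : V → β) (P : β → Prop) [DecidablePred P] :
    #{x ∈ s | P (f x)} = ∑ b with P b, #{x ∈ s | f x = b} := by
  rw [card_eq_sum_card_fiberwise (f := f) fun x hx =>
    mem_filter.mpr ⟨mem_univ _, (mem_filter.mp hx).2⟩]
  refine sum_congr rfl fun b hb => congrArg card ?_
  rw [filter_filter]
  exact filter_congr fun x _ => ⟨And.right, fun hx => ⟨hx ▸ (mem_filter.mp hb).2, hx⟩⟩

variable {α : Type}

namespace GML

lemma sat_bigAnd (G : LGraph α) (v : G.V) :
    ∀ l : List (GML α), sat G (bigAnd l) v ↔ ∀ φ ∈ l, sat G φ v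
  | [] => by simp [bigAnd, sat]
  | φ :: l => by simp [bigAnd, sat, sat_bigAnd G v l]

lemma sat_bigAnd_univ_map {β : Type} [Fintype β] (G : LGraph α) (v : G.V) (f : β → GML α) :
    sat G (bigAnd ((univ : Finset β).toList.map f)) v ↔ ∀ b, sat G (f b) v := by
  simp [sat_bigAnd]

lemma sat_dia_iff (G : LGraph α) (m : ℕ) (ψ : GML α) (v : G.V) :
    sat G (.dia m ψ) v ↔ m ≤ #{u ∈ G.adj v | sat G ψ u} := by
  constructor
  · rintro ⟨s, hsub, hcard, hall⟩
    exact hcard.trans (card_le_card fun u hu => mem_filter.mpr ⟨hsub hu, hall u hu⟩)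
  · exact fun h => ⟨_, filter_subset _ _, h, fun u hu => (mem_filter.mp hu).2⟩

lemma sat_diaEq_iff (G : LGraph α) (ℓ : ℕ) (ψ : GML α) (v : G.V) :
    sat G (diaEq ℓ ψ) v ↔ #{u ∈ G.adj v | sat G ψ u} = ℓ := by
  change sat G (.dia ℓ ψ) v ∧ ¬ sat G (.dia (ℓ + 1) ψ) v ↔ _
  rw [sat_dia_iff, sat_dia_iff]
  omega

lemma sat_cappedDia_iff {k : ℕ} (G : LGraph α) (c : Fin (k + 1)) (ψ : GML α) (v : G.V) :
    sat G (if (c : ℕ) < k then diaEq c ψ else dia k ψ) v ↔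
      (c : ℕ) = min #{u ∈ G.adj v | sat G ψ u} k := by
  have hc := c.is_le
  split_ifs with hck
  · rw [sat_diaEq_iff]; omega
  · rw [sat_dia_iff]; omega

end GML

namespace LGraph

noncomputable def labels (G : LGraph α) (v : G.V) : α → Bool := fun p => decide (p ∈ G.label v)

variable [Fintype α] [DecidableEq α]

noncomputable def typeOf (G : LGraph α) (k : ℕ) : ∀ n : ℕ, G.V → TypeData α k n
  | 0 => G.labels
  | n + 1 => fun v =>
    (G.labels v, fun τ => ⟨min #{u ∈ G.adj v | G.typeOf k n u = τ} k, by omega⟩)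

lemma labels_eq_of_typeOf_eq {G G' : LGraph α} {k n : ℕ} {w : G.V} {w' : G'.V}
    (h : G.typeOf k n w = G'.typeOf k n w') : G.labels w = G'.labels w' := by
  cases n with
  | zero => exact h
  | succ n => exact congrArg Prod.fst h

end LGraph

namespace GML

variable [Fintype α] [DecidableEq α]

lemma sat_baseFormula_iff (G : LGraph α) (v : G.V) (t : α → Bool) :
    sat G (baseFormula t) v ↔ t = G.labels v := by
  rw [baseFormula, sat_bigAnd_univ_map, funext_iff]
  refine forall_congr' fun p => ?_
  cases hp : t p <;> simp [sat, LGraph.labels]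

lemma sat_toFormula_iff {k : ℕ} :
    ∀ {n : ℕ} (G : LGraph α) (v : G.V) (τ : TypeData α k n),
      sat G τ.toFormula v ↔ τ = G.typeOf k n v
  | 0, G, v, τ => sat_baseFormula_iff G v τ
  | n + 1, G, v, τ => by
    have hfiber (σ : TypeData α k n) :
        #{u ∈ G.adj v | sat G σ.toFormula u} = #{u ∈ G.adj v | G.typeOf k n u = σ} :=
      congrArg card <| filter_congr fun u _ => (sat_toFormula_iff G u σ).trans eq_comm
    change sat G (baseFormula τ.1) v ∧ sat G (bigAnd _) v ↔ _
    rw [sat_baseFormula_iff, sat_bigAnd_univ_map]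
    erw [Prod.ext_iff]
    simp only [sat_cappedDia_iff, hfiber, funext_iff, Fin.ext_iff]
    rfl

def typeExt (k n : ℕ) (φ : GML α) : Set (TypeData α k n) :=
  {τ | ∃ (H : LGraph α) (u : H.V), H.typeOf k n u = τ ∧ sat H φ u}

def TypeInvariant (k n : ℕ) (φ : GML α) : Prop :=
  ∀ (G G' : LGraph α) (w : G.V) (w' : G'.V),
    G.typeOf k n w = G'.typeOf k n w' → (sat G φ w ↔ sat G' φ w')

lemma TypeInvariant.sat_iff {k n : ℕ} {φ : GML α} (hφ : TypeInvariant k n φ)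
    (G : LGraph α) (w : G.V) : sat G φ w ↔ G.typeOf k n w ∈ typeExt k n φ :=
  ⟨fun h => ⟨G, w, rfl, h⟩, fun ⟨H, u, hu, h⟩ => (hφ H G u w hu).mp h⟩

lemma TypeInvariant.dia {k n m : ℕ} {ψ : GML α} (hψ : TypeInvariant k n ψ) (hm : m ≤ k) :
    TypeInvariant k (n + 1) (.dia m ψ) := by
  have hcount (G : LGraph α) (w : G.V) : #{u ∈ G.adj w | sat G ψ u} =
      ∑ τ with τ ∈ typeExt k n ψ, #{u ∈ G.adj w | G.typeOf k n u = τ} := by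
    simp only [hψ.sat_iff G]
    exact card_filter_comp_eq_sum _ _ (· ∈ typeExt k n ψ)
  intro G G' w w' h
  rw [sat_dia_iff, sat_dia_iff, hcount, hcount]
  exact le_sum_iff_le_sum_of_min_eq hm fun τ _ =>
    congrArg Fin.val (congrFun (congrArg Prod.snd h) τ)

lemma typeInvariant {k : ℕ} :
    ∀ (φ : GML α) {n : ℕ}, φ.mdepth ≤ n → φ.width ≤ k → TypeInvariant k n φ
  | .top, _, _, _ => fun _ _ _ _ _ => Iff.rfl
  | .lab p, _, _, _ => fun _ _ _ _ h => by
    simpa [sat, LGraph.labels] using congrFun (LGraph.labels_eq_of_typeOf_eq h) p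
  | .neg φ, _, hd, hw => fun G G' w w' h => not_congr (typeInvariant φ hd hw G G' w w' h)
  | .and φ ψ, _, hd, hw => fun G G' w w' h => by
    simp only [mdepth, width, max_le_iff] at hd hw
    exact and_congr (typeInvariant φ hd.1 hw.1 G G' w w' h)
      (typeInvariant ψ hd.2 hw.2 G G' w w' h)
  | .dia m ψ, n + 1, hd, hw => by
    simp only [mdepth, width, max_le_iff] at hd hw
    exact (typeInvariant ψ (by omega) hw.2).dia hw.1

end GML

/-- Every GML formula of modal depth (at most) `n` and width (at most) `k`
is logically equivalent over pointed labeled graphs to a finite disjunction of graded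
`α`-types of width `k` and modal depth `n`. -/
theorem gml_equivalent_to_finite_disjunction_of_types
    {α : Type} [Fintype α] [DecidableEq α] (k n : ℕ) (φ : GML α)
    (hd : φ.mdepth ≤ n) (hw : φ.width ≤ k) :
    ∃ T : Finset (TypeData α k n), ∀ (G : LGraph α) (w : G.V),
      GML.sat G φ w ↔ ∃ τ ∈ T, GML.sat G τ.toFormula w := by
  refine ⟨univ.filter (· ∈ GML.typeExt k n φ), fun G w => ?_⟩
  simp only [(GML.typeInvariant φ hd hw).sat_iff G, GML.sat_toFormula_iff, mem_filter,
    mem_univ, true_and, exists_eq_right]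
end

section
/- For every CMPA over Π there is an equivalent ω-GML formula over Π: the countable disjunction of all full graded Π-types τ of any modal depth n such that some pointed Π-labeled graph with full type τ at depth n is accepted by the automaton in round n. A pointed graph satisfies this disjunction if and only if the CMPA accepts it. -/
/-- Abstract data of a full graded `α`-type: at depth 0, which labels hold; at depth `n+1`,
the depth-0 data, a finitely supported function giving for each depth-`n` full type the exact
number of out-neighbours of that type, and the total number of out-neighbours. -/
def FullTD (α : Type) : ℕ → Type
  | 0 => α → Bool
  | n + 1 => (α → Bool) × (FullTD α n →₀ ℕ) × ℕ

/-- The GML formula of a full graded `α`-type of modal depth `n`: at depth `n+1`, the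
conjunction of the depth-0 type with the conjuncts `◇_{=ℓ}τ` for each depth-`n` full type `τ`
realized by exactly `ℓ ≥ 1` out-neighbours, together with `◇_{=m}⊤` where `m` is the total
number of out-neighbours. -/
noncomputable def FullTD.toFormula {α : Type} [Fintype α] [DecidableEq α] :
    ∀ {n : ℕ}, FullTD α n → GML α
  | 0, t => baseFormula t
  | n + 1, t =>
    GML.and (baseFormula t.1)
      (GML.and
        (bigAnd (t.2.1.support.toList.map fun τ =>
          GML.diaEq (t.2.1 τ) (FullTD.toFormula τ)))
        (GML.diaEq t.2.2 GML.top))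

/-- A counting message passing automaton (CMPA) over node label symbols `α` with state
set `Q`: an initialization function from label sets to states, a transition function taking
the current state and the multiset of out-neighbour states, and accepting states `F`. -/
structure CMPA (α Q : Type) where
  init : Set α → Q
  trans : Q → Multiset Q → Q
  F : Set Q

/-- The state of a node at each round: round 0 is given by the initialization function on
the node's labels, and round `n+1` applies the transition function to the node's round-`n`
state and the multiset of round-`n` states of its out-neighbours. -/
def CMPA.state {α Q : Type} (A : CMPA α Q) (G : LGraph α) : ℕ → G.V → Q
  | 0, v => A.init (G.label v)
  | n + 1, v => A.trans (A.state G n v) ((G.adj v).val.map (A.state G n))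

/-- The CMPA accepts `(G, w)` iff `w` visits an accepting state at some round. -/
def CMPA.accepts {α Q : Type} (A : CMPA α Q) (G : LGraph α) (w : G.V) : Prop :=
  ∃ n : ℕ, A.state G n w ∈ A.F

/-- The full graded `α`-type (as data) of modal depth `n` of a pointed graph. -/
noncomputable def fullTypeOf {α : Type} (G : LGraph α) : ∀ n : ℕ, G.V → FullTD α n
  | 0, v => fun p => @decide (p ∈ G.label v) (Classical.propDecidable _)
  | n + 1, v =>
    letI := Classical.decEq (FullTD α n)
    ((fun p => @decide (p ∈ G.label v) (Classical.propDecidable _)),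
      Multiset.toFinsupp ((G.adj v).val.map (fullTypeOf G n)),
      (G.adj v).card)

/-- The set of all full graded `α`-types `τ` of any modal depth `n` such that some pointed
`α`-labeled graph with full type `τ` at depth `n` is accepted by the CMPA `A` in round `n`. -/
def acceptTypeSet {α Q : Type} (A : CMPA α Q) : Set (Σ n : ℕ, FullTD α n) :=
  {τ | ∃ (G : LGraph α) (w : G.V), fullTypeOf G τ.1 w = τ.2 ∧ A.state G τ.1 w ∈ A.F}

section Aux

open Classical in
lemma sat_bigAnd {α : Type} (G : LGraph α) (l : List (GML α)) (v : G.V) :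
    GML.sat G (bigAnd l) v ↔ ∀ φ ∈ l, GML.sat G φ v := by
  induction l with
  | nil => simp [bigAnd, GML.sat]
  | cons φ l ih => simp [bigAnd, GML.sat, ih]

open Classical in
lemma sat_dia {α : Type} (G : LGraph α) (k : ℕ) (φ : GML α) (v : G.V) :
    GML.sat G (.dia k φ) v ↔
      k ≤ ((G.adj v).filter (fun u => GML.sat G φ u)).card := by
  constructor
  · rintro ⟨s, hs, hk, hall⟩
    exact hk.trans (Finset.card_le_card
      (fun u hu => Finset.mem_filter.mpr ⟨hs hu, hall u hu⟩))
  · intro h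
    exact ⟨_, Finset.filter_subset _ _, h, fun u hu => (Finset.mem_filter.mp hu).2⟩

open Classical in
lemma sat_diaEq {α : Type} (G : LGraph α) (k : ℕ) (φ : GML α) (v : G.V) :
    GML.sat G (GML.diaEq k φ) v ↔
      ((G.adj v).filter (fun u => GML.sat G φ u)).card = k := by
  have h1 := sat_dia G k φ v
  have h2 := sat_dia G (k + 1) φ v
  simp only [GML.diaEq, GML.sat] at *
  rw [h1, h2]
  omega

open Classical in
lemma sat_base {α : Type} [Fintype α] [DecidableEq α] (G : LGraph α)
    (t : α → Bool) (v : G.V) :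
    GML.sat G (baseFormula t) v ↔ ∀ p : α, p ∈ G.label v ↔ t p = true := by
  simp only [baseFormula, sat_bigAnd, List.mem_map, Finset.mem_toList,
    Finset.mem_univ, true_and]
  constructor
  · intro h p
    have := h _ ⟨p, rfl⟩
    by_cases hp : t p <;> simp [hp, GML.sat] at this ⊢ <;> tauto
  · rintro h φ ⟨p, rfl⟩
    by_cases hp : t p <;> simp [hp, GML.sat, h p]

lemma multiset_eq_of_counts {β : Type} [DecidableEq β] (M M' : Multiset β)
    (hcard : Multiset.card M = Multiset.card M')
    (h : ∀ b ∈ M', M.count b = M'.count b) : M = M' := by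
  have hle : M' ≤ M := Multiset.le_iff_count.mpr fun b => by
    by_cases hb : b ∈ M'
    · exact (h b hb).ge
    · simp [Multiset.count_eq_zero_of_notMem hb]
  exact (Multiset.eq_of_le_of_card_le hle hcard.le).symm

lemma rel_of_map_eq {β β' γ : Type} {f : β → γ} {g : β' → γ}
    {s : Multiset β} {t : Multiset β'} (h : s.map f = t.map g) :
    Multiset.Rel (fun a b => f a = g b) s t := by
  have := Multiset.rel_eq.mpr h
  rwa [Multiset.rel_map] at this

open Classical in
lemma type_iff {α : Type} [Fintype α] [DecidableEq α] :
    ∀ (n : ℕ) (G' : LGraph α) (v' : G'.V) (G : LGraph α) (v : G.V),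
      GML.sat G (FullTD.toFormula (fullTypeOf G' n v')) v ↔
        fullTypeOf G n v = fullTypeOf G' n v' := by
  intro n
  induction n with
  | zero =>
    intro G' v' G v
    simp only [fullTypeOf, FullTD.toFormula, sat_base, decide_eq_true_eq]
    constructor
    · intro h; funext p; exact decide_eq_decide.mpr (h p)
    · intro h p; exact decide_eq_decide.mp (congrFun h p)
  | succ n ih =>
    intro G' v' G v
    have satand : ∀ (φ ψ : GML α) (u : G.V),
        GML.sat G (.and φ ψ) u ↔ GML.sat G φ u ∧ GML.sat G ψ u := fun _ _ _ => Iff.rfl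
    have sattop : ∀ u : G.V, GML.sat G .top u ↔ True := fun _ => Iff.rfl
    simp only [fullTypeOf, FullTD.toFormula, satand, sat_base, sat_bigAnd, sat_diaEq,
      List.mem_map, Finset.mem_toList, decide_eq_true_eq, forall_exists_index, and_imp,
      sattop, Finset.filter_true,
      Prod.mk.injEq, Multiset.toFinsupp_support, Multiset.mem_toFinset, Multiset.mem_map]
    have hcount : ∀ u' ∈ (G'.adj v').val,
        ((G.adj v).filter (fun u => GML.sat G (FullTD.toFormula (fullTypeOf G' n u')) u)).card
          = Multiset.count (fullTypeOf G' n u') ((G.adj v).val.map (fullTypeOf G n)) := by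
      intro u' hu'
      rw [Multiset.count_map]
      rw [show ((G.adj v).filter
          (fun u => GML.sat G (FullTD.toFormula (fullTypeOf G' n u')) u)).card
        = Multiset.card (((G.adj v).filter
          (fun u => GML.sat G (FullTD.toFormula (fullTypeOf G' n u')) u)).val) from rfl,
        Finset.filter_val]
      exact congrArg Multiset.card (Multiset.filter_congr
        (fun u _ => by rw [ih G' u' G u]; exact eq_comm))
    constructor
    · rintro ⟨hA, hB, hC⟩
      have hM : (G.adj v).val.map (fullTypeOf G n)
          = (G'.adj v').val.map (fullTypeOf G' n) := by
        apply multiset_eq_of_counts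
        · simp only [Multiset.card_map, ← Finset.card_def]
          exact hC
        · intro b hb
          obtain ⟨u', hu', rfl⟩ := Multiset.mem_map.mp hb
          have hsat := hB _ _ u' hu' rfl rfl
          rw [sat_diaEq] at hsat
          rw [← hcount u' hu', hsat, Multiset.toFinsupp_apply]
      exact Prod.ext_iff.mpr ⟨funext fun p => decide_eq_decide.mpr (hA p),
        Prod.ext_iff.mpr ⟨by rw [hM], hC⟩⟩
    · intro hEq
      have hEa : (fun p => @decide (p ∈ G.label v) (Classical.propDecidable _))
          = (fun p => @decide (p ∈ G'.label v') (Classical.propDecidable _)) :=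
        congrArg Prod.fst hEq
      have hEb := congrArg (fun x => x.2.1) hEq
      have hEc : (G.adj v).card = (G'.adj v').card := congrArg (fun x => x.2.2) hEq
      have hM : (G.adj v).val.map (fullTypeOf G n)
          = (G'.adj v').val.map (fullTypeOf G' n) :=
        Multiset.toFinsupp.injective hEb
      refine ⟨fun p => decide_eq_decide.mp (congrFun hEa p), ?_, hEc⟩
      rintro φ x u' hu' rfl rfl
      rw [sat_diaEq, hcount u' hu', hM, Multiset.toFinsupp_apply]

open Classical in
lemma type_restrict {α : Type} :
    ∀ (n : ℕ) (G : LGraph α) (v : G.V) (G' : LGraph α) (v' : G'.V),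
      fullTypeOf G (n+1) v = fullTypeOf G' (n+1) v' →
      fullTypeOf G n v = fullTypeOf G' n v' := by
  intro n
  induction n with
  | zero =>
    intro G v G' v' h
    exact congrArg Prod.fst h
  | succ n ih =>
    intro G v G' v' h
    have h1 : (fun p => @decide (p ∈ G.label v) (Classical.propDecidable _))
        = (fun p => @decide (p ∈ G'.label v') (Classical.propDecidable _)) :=
      congrArg Prod.fst h
    have h2 := congrArg (fun x => x.2.1) h
    have h3 : (G.adj v).card = (G'.adj v').card := congrArg (fun x => x.2.2) h
    simp only [fullTypeOf] at h2 ⊢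
    have hmap : ((G.adj v).val.map (fullTypeOf G (n+1)))
        = ((G'.adj v').val.map (fullTypeOf G' (n+1))) :=
      Multiset.toFinsupp.injective h2
    have hrel := (rel_of_map_eq hmap).mono
      (fun a _ b _ hab => ih G a G' b hab)
    have hmap1 : ((G.adj v).val.map (fullTypeOf G n))
        = ((G'.adj v').val.map (fullTypeOf G' n)) :=
      Multiset.rel_eq.mp (Multiset.rel_map.mpr hrel)
    exact Prod.ext_iff.mpr ⟨h1, Prod.ext_iff.mpr ⟨by rw [hmap1], h3⟩⟩

open Classical in
lemma state_eq_of_type_eq {α Q : Type} (A : CMPA α Q) :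
    ∀ (n : ℕ) (G : LGraph α) (v : G.V) (G' : LGraph α) (v' : G'.V),
      fullTypeOf G n v = fullTypeOf G' n v' →
      A.state G n v = A.state G' n v' := by
  intro n
  induction n with
  | zero =>
    intro G v G' v' h
    have hl : G.label v = G'.label v' := by
      ext p
      have := congrFun h p
      simpa [fullTypeOf, decide_eq_decide] using this
    simp [CMPA.state, hl]
  | succ n ih =>
    intro G v G' v' h
    have h1 := type_restrict n G v G' v' h
    have h2 := congrArg (fun x => x.2.1) h
    simp only [fullTypeOf] at h2
    have hmap : ((G.adj v).val.map (fullTypeOf G n))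
        = ((G'.adj v').val.map (fullTypeOf G' n)) :=
      Multiset.toFinsupp.injective h2
    have hst : ((G.adj v).val.map (A.state G n))
        = ((G'.adj v').val.map (A.state G' n)) := by
      rw [← Multiset.rel_eq, Multiset.rel_map]
      exact (rel_of_map_eq hmap).mono (fun a _ b _ hab => ih G a G' b hab)
    simp only [CMPA.state]
    rw [ih G v G' v' h1, hst]

instance fullTDCountable {α : Type} [Fintype α] : ∀ n, Countable (FullTD α n)
  | 0 => inferInstanceAs (Countable (α → Bool))
  | n + 1 =>
    haveI := fullTDCountable (α := α) n
    inferInstanceAs (Countable ((α → Bool) × (FullTD α n →₀ ℕ) × ℕ))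

end Aux

/-- For every CMPA over `α` there is an equivalent ω-GML formula, namely
the countable disjunction of all full graded `α`-types `τ` of any depth `n` such that some
pointed graph with full type `τ` at depth `n` is accepted by the automaton in round `n`:
this set of types is countable, and a pointed graph satisfies some disjunct iff the CMPA
accepts it. -/
theorem cmpa_equivalent_omega_gml {α : Type} [Fintype α] [DecidableEq α]
    {Q : Type} [Countable Q] (A : CMPA α Q) :
    (acceptTypeSet A).Countable ∧
    ∀ (G : LGraph α) (w : G.V),
      A.accepts G w ↔ ∃ τ ∈ acceptTypeSet A, GML.sat G (FullTD.toFormula τ.2) w := by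
  refine ⟨Set.to_countable _, fun G w => ⟨?_, ?_⟩⟩
  · rintro ⟨n, hn⟩
    exact ⟨⟨n, fullTypeOf G n w⟩, ⟨G, w, rfl, hn⟩, (type_iff n G w G w).mpr rfl⟩
  · rintro ⟨⟨n, t⟩, ⟨G', w', htype, hacc⟩, hsat⟩
    simp only at htype hacc hsat
    subst htype
    have ht := (type_iff n G' w' G w).mp hsat
    exact ⟨n, by rw [state_eq_of_type_eq A n G w G' w' ht]; exact hacc⟩
end
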